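/- Let p : U → X be a faithfully flat affine morphism with U affine, and let T = p_* p^* on quasi-coherent sheaves. For every quasi-coherent sheaf F on X, the canonical augmented cosimplicial complex F → TF → T²F → T³F → ⋯ is a resolution of F (i.e. the complex 0 → F → TF → T²F → ⋯ is exact), the Amitsur/descent resolution. -/

import Mathlib

/-!
The coface maps of the Amitsur complex satisfy the cosimplicial identities, so `d ≫ d = 0`.
After applying `T` once more, the monad multiplication `μ : T² ⟶ T` is an extra codegeneracy
(`T η ≫ μ = 𝟙` and `μ` is natural), hence a contracting homotopy, and the complex `T (Tⁿ M)`
is exact. Since `T` is base change along the faithfully flat `R → S`, exactness of the complex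
and injectivity of `η` descend from `T` to the original complex.
-/

open CategoryTheory

universe u

variable (R S : Type u) [CommRing R] [CommRing S] [Algebra R S]

/-- The monad `T = p_* p^*` associated to the faithfully flat affine morphism
`p : Spec S → Spec R`, i.e. `T M = S ⊗_R M` as an `R`-module. -/
noncomputable def Tmonad : ModuleCat.{u} R ⥤ ModuleCat.{u} R :=
  ModuleCat.extendScalars (algebraMap R S) ⋙ ModuleCat.restrictScalars (algebraMap R S)

/-- The unit `F → TF` of the adjunction `p^* ⊣ p_*`, i.e. `m ↦ 1 ⊗ m`. -/
noncomputable def ηT : 𝟭 (ModuleCat.{u} R) ⟶ Tmonad R S :=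
  (ModuleCat.extendRestrictScalarsAdj (algebraMap R S)).unit

/-- Iterates `T^n` of the monad `T`. -/
noncomputable def Tpow : ℕ → (ModuleCat.{u} R ⥤ ModuleCat.{u} R)
  | 0 => 𝟭 _
  | n + 1 => Tpow n ⋙ Tmonad R S

/-- The coface maps `δᵢ : T^n → T^(n+1)` of the (augmented) cosimplicial Amitsur
complex, inserting the unit `η` in the `i`-th slot. -/
noncomputable def δT : (n : ℕ) → Fin (n + 1) → (Tpow R S n ⟶ Tpow R S (n + 1))
  | n, ⟨0, _⟩ => (Tpow R S n).rightUnitor.inv ≫ Functor.whiskerLeft (Tpow R S n) (ηT R S)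
  | n + 1, ⟨i + 1, h⟩ => Functor.whiskerRight (δT n ⟨i, by omega⟩) (Tmonad R S)

/-- The differential `dⁿ = Σ (-1)ⁱ δᵢ : T^n F → T^(n+1) F` of the Amitsur (descent)
complex `0 → F → TF → T²F → ⋯`. -/
noncomputable def dT (n : ℕ) (M : ModuleCat.{u} R) :
    (Tpow R S n).obj M ⟶ (Tpow R S (n + 1)).obj M :=
  ∑ i : Fin (n + 1), ((-1 : ℤ) ^ (i : ℕ)) • (δT R S n i).app M

section AlternatingCofaceSum

variable {C : Type*} [Category C] [Preadditive C] {X : ℕ → C}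

/-- Pairs the term `δⱼ ≫ δᵢ` (`i ≤ j`) of `d ≫ d` with `δᵢ ≫ δⱼ₊₁`, which cancels it. -/
def cofacePairSwap (n : ℕ) (p : Fin (n + 1) × Fin (n + 2)) : Fin (n + 1) × Fin (n + 2) :=
  if h : p.2 ≤ p.1.castSucc then (p.2.castLT (by simp [Fin.le_def] at h; omega), p.1.succ)
  else (p.2.pred (by rintro h'; simp [h'] at h), p.1.castSucc)

lemma cofacePairSwap_ne (n : ℕ) (p : Fin (n + 1) × Fin (n + 2)) : cofacePairSwap n p ≠ p := by
  intro h
  have h₂ := congrArg (fun q : Fin (n + 1) × Fin (n + 2) => (q.2 : ℕ)) h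
  unfold cofacePairSwap at h₂
  split_ifs at h₂ with h <;> simp [Fin.le_def] at h h₂ <;> omega

lemma cofacePairSwap_involutive (n : ℕ) : Function.Involutive (cofacePairSwap n) := by
  rintro ⟨j, i⟩
  by_cases h : i ≤ j.castSucc
  · obtain ⟨i, rfl⟩ : ∃ i' : Fin (n + 1), i'.castSucc = i :=
      Fin.exists_castSucc_eq.2 fun hi => by simp [hi, Fin.le_def] at h; omega
    rw [Fin.castSucc_le_castSucc_iff] at h
    simp [cofacePairSwap, h, not_lt.2 h]
  · obtain ⟨i, rfl⟩ : ∃ i' : Fin (n + 1), i'.succ = i :=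
      Fin.exists_succ_eq.2 fun hi => by simp [hi] at h
    rw [Fin.succ_le_castSucc_iff, not_lt] at h
    simp [cofacePairSwap, h, not_lt.2 h]

theorem alternating_sum_comp_alternating_sum_eq_zero (δ : ∀ n, Fin (n + 1) → (X n ⟶ X (n + 1)))
    (hδ : ∀ n (i j : Fin (n + 1)), i ≤ j → δ n i ≫ δ (n + 1) j.succ = δ n j ≫ δ (n + 1) i.castSucc)
    (n : ℕ) :
    (∑ i : Fin (n + 1), (-1 : ℤ) ^ (i : ℕ) • δ n i) ≫
      (∑ i : Fin (n + 2), (-1 : ℤ) ^ (i : ℕ) • δ (n + 1) i) = 0 := by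
  set f : Fin (n + 1) × Fin (n + 2) → (X n ⟶ X (n + 2)) :=
    fun p => (-1 : ℤ) ^ ((p.1 : ℕ) + p.2) • (δ n p.1 ≫ δ (n + 1) p.2)
  have hcancel (i j : Fin (n + 1)) (hij : i ≤ j) : f (j, i.castSucc) + f (i, j.succ) = 0 := by
    simp only [f, Fin.val_castSucc, Fin.val_succ, hδ n i j hij]
    rw [show (i : ℕ) + (j + 1) = j + i + 1 by omega, pow_succ, mul_neg_one, neg_smul,
      add_neg_cancel]
  have hpair (p : Fin (n + 1) × Fin (n + 2)) : f p + f (cofacePairSwap n p) = 0 := by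
    obtain ⟨j, i⟩ := p
    by_cases h : i ≤ j.castSucc
    · obtain ⟨i, rfl⟩ : ∃ i' : Fin (n + 1), i'.castSucc = i :=
        Fin.exists_castSucc_eq.2 fun hi => by simp [hi, Fin.le_def] at h; omega
      rw [Fin.castSucc_le_castSucc_iff] at h
      simpa [cofacePairSwap, h] using hcancel i j h
    · obtain ⟨i, rfl⟩ : ∃ i' : Fin (n + 1), i'.succ = i :=
        Fin.exists_succ_eq.2 fun hi => by simp [hi] at h
      rw [Fin.succ_le_castSucc_iff, not_lt] at h
      refine (add_comm _ _).trans ?_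
      simpa [cofacePairSwap, not_lt.2 h] using hcancel j i h
  calc _ = ∑ p, f p := by
        rw [Fintype.sum_prod_type, Preadditive.sum_comp]
        refine Finset.sum_congr rfl fun j _ => ?_
        rw [Preadditive.zsmul_comp, Preadditive.comp_sum, Finset.smul_sum]
        refine Finset.sum_congr rfl fun i _ => ?_
        rw [Preadditive.comp_zsmul, smul_smul, ← pow_add]
    _ = 0 := Finset.sum_ninvolution _ hpair (fun p _ => cofacePairSwap_ne n p)
        (fun _ => Finset.mem_univ _) (cofacePairSwap_involutive n)

/-- `s, s'` form an extra codegeneracy for the cofaces `δ, δ'`. -/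
theorem alternating_sum_comp_add_comp_alternating_sum_eq_id {Y₀ Y₁ Y₂ : C} {n : ℕ}
    (δ : Fin (n + 1) → (Y₀ ⟶ Y₁)) (δ' : Fin (n + 2) → (Y₁ ⟶ Y₂)) (s : Y₁ ⟶ Y₀) (s' : Y₂ ⟶ Y₁)
    (h₀ : δ' 0 ≫ s' = 𝟙 Y₁) (hsucc : ∀ i, δ' i.succ ≫ s' = s ≫ δ i) :
    (∑ i : Fin (n + 2), (-1 : ℤ) ^ (i : ℕ) • δ' i) ≫ s' +
      s ≫ (∑ i : Fin (n + 1), (-1 : ℤ) ^ (i : ℕ) • δ i) = 𝟙 Y₁ := by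
  have hterm (i : Fin (n + 1)) :
      ((-1 : ℤ) ^ (i.succ : ℕ) • δ' i.succ) ≫ s' = -(s ≫ ((-1 : ℤ) ^ (i : ℕ) • δ i)) := by
    rw [Preadditive.zsmul_comp, Preadditive.comp_zsmul, hsucc, Fin.val_succ, pow_succ, mul_neg_one,
      neg_smul]
  rw [Fin.sum_univ_succ, Preadditive.add_comp, Preadditive.sum_comp, Preadditive.comp_sum,
    Finset.sum_congr rfl fun i _ => hterm i, Finset.sum_neg_distrib, Fin.val_zero, pow_zero,
    one_smul, h₀, neg_add_cancel_right]

end AlternatingCofaceSum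

lemma ModuleCat.exact_of_homotopy {A : Type*} [Ring A] {M₁ M₂ M₃ : ModuleCat A}
    (f : M₁ ⟶ M₂) (g : M₂ ⟶ M₃) (h : M₂ ⟶ M₁) (k : M₃ ⟶ M₂) (hfg : f ≫ g = 0)
    (hid : g ≫ k + h ≫ f = 𝟙 M₂) : Function.Exact f g := by
  intro y
  refine ⟨fun hy => ⟨h y, ?_⟩, ?_⟩
  · simpa [hy] using ConcreteCategory.congr_hom hid y
  · rintro ⟨x, rfl⟩
    exact ConcreteCategory.congr_hom hfg x

namespace Amitsur

/-- The monad of `p^* ⊣ p_*`; its functor and unit are `Tmonad R S` and `ηT R S` definitionally. -/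
noncomputable abbrev monad : Monad (ModuleCat.{u} R) :=
  (ModuleCat.extendRestrictScalarsAdj.{u} (algebraMap R S)).toMonad

instance : (Tmonad R S).Additive :=
  have := (ModuleCat.extendRestrictScalarsAdj.{u} (algebraMap R S)).left_adjoint_additive
  inferInstanceAs (ModuleCat.extendScalars _ ⋙ ModuleCat.restrictScalars _).Additive

lemma δT_zero_app (n : ℕ) (M : ModuleCat.{u} R) :
    (δT R S n 0).app M = (ηT R S).app ((Tpow R S n).obj M) := by
  cases n <;> exact Category.id_comp _

lemma δT_succ_app (n : ℕ) (i : Fin (n + 1)) (M : ModuleCat.{u} R) :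
    (δT R S (n + 1) i.succ).app M = (Tmonad R S).map ((δT R S n i).app M) := rfl

lemma δT_zero_comp (n : ℕ) (j : Fin (n + 1)) (M : ModuleCat.{u} R) :
    (δT R S n 0).app M ≫ (δT R S (n + 1) j.succ).app M =
      (δT R S n j).app M ≫ (δT R S (n + 1) 0).app M := by
  rw [δT_zero_app, δT_zero_app, δT_succ_app]
  exact ((ηT R S).naturality _).symm

lemma δT_comp_δT (M : ModuleCat.{u} R) (n : ℕ) (i j : Fin (n + 1)) (hij : i ≤ j) :
    (δT R S n i).app M ≫ (δT R S (n + 1) j.succ).app M =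
      (δT R S n j).app M ≫ (δT R S (n + 1) i.castSucc).app M := by
  induction n with
  | zero =>
    obtain rfl : i = 0 := Fin.fin_one_eq_zero i
    exact δT_zero_comp R S 0 j M
  | succ n ih =>
    cases i using Fin.cases with
    | zero => exact δT_zero_comp R S _ j M
    | succ i =>
      obtain ⟨j, rfl⟩ : ∃ j' : Fin (n + 1), j'.succ = j :=
        Fin.exists_succ_eq.2 fun hj => by simp [hj] at hij
      have := congrArg (Tmonad R S).map (ih i j (Fin.succ_le_succ_iff.1 hij))
      rw [Functor.map_comp, Functor.map_comp] at this
      rw [← Fin.succ_castSucc]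
      exact this

lemma dT_comp_dT (n : ℕ) (M : ModuleCat.{u} R) : dT R S n M ≫ dT R S (n + 1) M = 0 :=
  alternating_sum_comp_alternating_sum_eq_zero (fun n i => (δT R S n i).app M)
    (δT_comp_δT R S M) n

lemma map_dT (n : ℕ) (M : ModuleCat.{u} R) :
    (Tmonad R S).map (dT R S n M) =
      ∑ i : Fin (n + 1), (-1 : ℤ) ^ (i : ℕ) • (Tmonad R S).map ((δT R S n i).app M) := by
  simp only [dT, Functor.map_sum, Functor.map_zsmul]

lemma exact_map_dT (n : ℕ) (M : ModuleCat.{u} R) :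
    Function.Exact ((Tmonad R S).map (dT R S n M)) ((Tmonad R S).map (dT R S (n + 1) M)) := by
  refine ModuleCat.exact_of_homotopy _ _ ((monad R S).μ.app ((Tpow R S n).obj M))
    ((monad R S).μ.app ((Tpow R S (n + 1)).obj M))
    (by rw [← Functor.map_comp, dT_comp_dT, Functor.map_zero]) ?_
  rw [map_dT, map_dT]
  refine alternating_sum_comp_add_comp_alternating_sum_eq_id _ _ _ _ ?_ fun i => ?_
  · rw [δT_zero_app]
    exact (monad R S).right_unit _
  · rw [δT_succ_app]
    exact (monad R S).μ.naturality _

/-- `S` with the `R`-module structure over which `T M = S ⊗[R] M` is formed; it agrees with the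
`Algebra` one only up to the linear equivalence below, not definitionally. -/
noncomputable abbrev baseModule : ModuleCat.{u} R :=
  (ModuleCat.restrictScalars (algebraMap R S)).obj (ModuleCat.of S S)

def baseModuleEquiv : baseModule R S ≃ₗ[R] S where
  toFun s := (show S from s)
  invFun s := s
  map_add' _ _ := rfl
  map_smul' r s := (Algebra.smul_def r (show S from s)).symm
  left_inv _ := rfl
  right_inv _ := rfl

instance [Module.FaithfullyFlat R S] : Module.FaithfullyFlat R (baseModule R S) :=
  .of_linearEquiv R S (baseModuleEquiv R S)

lemma coe_Tmonad_map {M N : ModuleCat.{u} R} (f : M ⟶ N) :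
    ⇑((Tmonad R S).map f) = ⇑(f.hom.lTensor (baseModule R S)) := rfl

lemma exact_Tmonad_map_iff [Module.FaithfullyFlat R S] {M₁ M₂ M₃ : ModuleCat.{u} R}
    (f : M₁ ⟶ M₂) (g : M₂ ⟶ M₃) :
    Function.Exact ((Tmonad R S).map f) ((Tmonad R S).map g) ↔ Function.Exact f g := by
  rw [coe_Tmonad_map, coe_Tmonad_map]
  exact Module.FaithfullyFlat.lTensor_exact_iff_exact R (baseModule R S) f.hom g.hom

lemma injective_Tmonad_map_iff [Module.FaithfullyFlat R S] {M N : ModuleCat.{u} R}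
    (f : M ⟶ N) : Function.Injective ((Tmonad R S).map f) ↔ Function.Injective f := by
  rw [coe_Tmonad_map]
  exact Module.FaithfullyFlat.lTensor_injective_iff_injective R (baseModule R S) f.hom

lemma injective_Tmonad_map_ηT (M : ModuleCat.{u} R) :
    Function.Injective ((Tmonad R S).map ((ηT R S).app M)) :=
  Function.LeftInverse.injective (g := (monad R S).μ.app M)
    fun x => ConcreteCategory.congr_hom ((monad R S).right_unit M) x

end Amitsur

/-- **Amitsur/descent resolution.**  Let `p : U → X` be a faithfully flat affine
morphism with `U` affine (here in the affine situation: a faithfully flat ring map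
`R → S`), and let `T = p_* p^*` on (quasi-coherent) modules.  For every module `F`,
the augmented cosimplicial complex `0 → F → TF → T²F → T³F → ⋯` is exact: the unit
`F → TF` is injective and the complex is exact at each `TⁿF`. -/
theorem stmt19 [Module.FaithfullyFlat R S] (M : ModuleCat.{u} R) :
    Function.Injective ⇑((ηT R S).app M) ∧
      ∀ n : ℕ, Function.Exact ⇑(dT R S n M) ⇑(dT R S (n + 1) M) :=
  ⟨(Amitsur.injective_Tmonad_map_iff R S _).1 (Amitsur.injective_Tmonad_map_ηT R S M),
    fun n => (Amitsur.exact_Tmonad_map_iff R S _ _).1 (Amitsur.exact_map_dT R S n M)⟩
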